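/- An orthogonal projection p ∈ B(H) is sub-harmonic for τ, i.e. τ(p) ≥ p, if and only if (1−p)·l_k·p = 0 for every k. -/

import Mathlib

open ContinuousLinearMap
open scoped InnerProductSpace ComplexOrder

/-! With `q = 1 - p`, each term `⟪l_k ξ, q l_k ξ⟫ = ‖q l_k ξ‖²` of the Kraus expansion of
`⟪ξ, (1 - τ(p)) ξ⟫` is nonnegative; for `ξ ∈ range p` the sum equals `-⟪ξ, (τ(p) - p) ξ⟫`, so
`τ(p) ≥ p` forces every `q l_k p` to vanish. Conversely, if `l_k p = p l_k p` for all `k`, then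
unitality gives `τ(p) p = p`, hence (as `τ(p)` is self-adjoint) `τ(p) - p = q τ(p) q`, which is
positive because `τ` is a positive map. -/

theorem IsStarProjection.sub_eq_conj_one_sub {R : Type*} [Ring R] [StarRing R] {p t : R}
    (hp : IsStarProjection p) (ht : IsSelfAdjoint t) (htp : t * p = p) :
    t - p = star (1 - p) * t * (1 - p) := by
  have hpt : p * t = p := by
    simpa only [star_mul, hp.isSelfAdjoint.star_eq, ht.star_eq] using congrArg star htp
  rw [hp.one_sub.isSelfAdjoint.star_eq]
  simp only [sub_mul, mul_sub, one_mul, mul_one, hpt, htp, hp.isIdempotentElem.eq, sub_self,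
    sub_zero]

theorem ContinuousLinearMap.isPositive_iff_forall_inner_nonneg {H : Type*}
    [NormedAddCommGroup H] [InnerProductSpace ℂ H] (T : H →L[ℂ] H) :
    T.IsPositive ↔ ∀ x, 0 ≤ ⟪x, T x⟫_ℂ := by
  refine (isPositive_iff_complex T).trans (forall_congr' fun x => ?_)
  rw [Complex.nonneg_iff, ← inner_conj_symm x, Complex.conj_re, Complex.conj_im]
  simp [Complex.ext_iff, and_comm, eq_comm]

section RCLike

variable {𝕜 H ι : Type*} [RCLike 𝕜] [NormedAddCommGroup H] [InnerProductSpace 𝕜 H]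
  [CompleteSpace H]

theorem hasSum_inner_of_hasSum_star_apply {l : ι → H →L[𝕜] H} {y : ι → H} {z : H}
    (h : HasSum (fun k => star (l k) (y k)) z) (ξ : H) :
    HasSum (fun k => ⟪l k ξ, y k⟫_𝕜) ⟪ξ, z⟫_𝕜 := by
  simpa only [innerSL_apply_apply, star_eq_adjoint, adjoint_inner_right] using
    h.mapL (innerSL 𝕜 ξ)

theorem IsStarProjection.inner_apply_self {p : H →L[𝕜] H} (hp : IsStarProjection p) (x : H) :
    ⟪x, p x⟫_𝕜 = ⟪p x, p x⟫_𝕜 := by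
  rw [← adjoint_inner_right, ← star_eq_adjoint, hp.isSelfAdjoint.star_eq, ← comp_apply,
    ← mul_def, hp.isIdempotentElem.eq]

theorem IsStarProjection.apply_eq_zero_iff_inner {p : H →L[𝕜] H} (hp : IsStarProjection p)
    (x : H) : p x = 0 ↔ ⟪x, p x⟫_𝕜 = 0 := by
  rw [hp.inner_apply_self, inner_self_eq_zero]

def IsKrausRepresentation (τ : (H →L[𝕜] H) → H →L[𝕜] H) (l : ι → H →L[𝕜] H) : Prop :=
  ∀ (x : H →L[𝕜] H) (ξ : H), HasSum (fun k => star (l k) (x (l k ξ))) (τ x ξ)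

theorem IsKrausRepresentation.mul_eq_of_forall_mul_mul_eq {τ : (H →L[𝕜] H) → H →L[𝕜] H}
    {l : ι → H →L[𝕜] H} (hτ : IsKrausRepresentation τ l)
    (hUnital : ∀ ξ : H, HasSum (fun k => star (l k) (l k ξ)) ξ)
    {x p : H →L[𝕜] H} (h : ∀ k, x * l k * p = l k * p) : τ x * p = p := by
  ext ξ
  refine (hτ x (p ξ)).unique ?_
  convert hUnital (p ξ) using 3 with k
  exact congrArg (· ξ) (h k)

end RCLike

namespace IsKrausRepresentation

variable {H ι : Type*} [NormedAddCommGroup H] [InnerProductSpace ℂ H] [CompleteSpace H]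
  {τ : (H →L[ℂ] H) → (H →L[ℂ] H)} {l : ι → H →L[ℂ] H}

theorem nonneg (hτ : IsKrausRepresentation τ l) {x : H →L[ℂ] H} (hx : 0 ≤ x) : 0 ≤ τ x := by
  rw [nonneg_iff_isPositive, isPositive_iff_forall_inner_nonneg] at hx ⊢
  exact fun ξ => (hasSum_inner_of_hasSum_star_apply (hτ x ξ) ξ).nonneg fun k => hx (l k ξ)

theorem le_of_forall_one_sub_mul_mul_eq_zero (hτ : IsKrausRepresentation τ l)
    (hUnital : ∀ ξ : H, HasSum (fun k => star (l k) (l k ξ)) ξ)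
    {p : H →L[ℂ] H} (hp : IsStarProjection p) (h : ∀ k, (1 - p) * l k * p = 0) :
    p ≤ τ p := by
  have hτp : 0 ≤ τ p := hτ.nonneg hp.nonneg
  have hfix : τ p * p = p := hτ.mul_eq_of_forall_mul_mul_eq hUnital fun k => by
    simpa only [sub_mul, one_mul, sub_eq_zero, eq_comm] using h k
  rw [← sub_nonneg, hp.sub_eq_conj_one_sub hτp.isSelfAdjoint hfix]
  exact star_left_conjugate_nonneg hτp _

theorem one_sub_mul_mul_eq_zero_of_le (hτ : IsKrausRepresentation τ l)
    (hUnital : ∀ ξ : H, HasSum (fun k => star (l k) (l k ξ)) ξ)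
    {p : H →L[ℂ] H} (hp : IsStarProjection p) (hle : p ≤ τ p) (k : ι) :
    (1 - p) * l k * p = 0 := by
  ext η
  set ξ := p η with hξ
  have hpξ : p ξ = ξ := by rw [hξ, ← comp_apply, ← mul_def, hp.isIdempotentElem.eq]
  have hterm : ∀ j, 0 ≤ ⟪l j ξ, (1 - p) (l j ξ)⟫_ℂ := fun j =>
    ((isPositive_iff_forall_inner_nonneg _).mp
      ((nonneg_iff_isPositive _).mp hp.one_sub.nonneg)) (l j ξ)
  have hsum : HasSum (fun j => ⟪l j ξ, (1 - p) (l j ξ)⟫_ℂ) (⟪ξ, ξ⟫_ℂ - ⟪ξ, τ p ξ⟫_ℂ) := by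
    simpa only [sub_apply, one_apply_eq_self, inner_sub_right] using
      (hasSum_inner_of_hasSum_star_apply (hUnital ξ) ξ).sub
        (hasSum_inner_of_hasSum_star_apply (hτ p ξ) ξ)
  have hsum_nonpos : ⟪ξ, ξ⟫_ℂ - ⟪ξ, τ p ξ⟫_ℂ ≤ 0 := by
    have hpos := (isPositive_iff_forall_inner_nonneg _).mp hle ξ
    rwa [sub_apply, inner_sub_right, hpξ, sub_nonneg, ← sub_nonpos] at hpos
  have hk : ⟪l k ξ, (1 - p) (l k ξ)⟫_ℂ = 0 :=
    le_antisymm ((le_hasSum hsum k fun j _ => hterm j).trans hsum_nonpos) (hterm k)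
  exact (hp.one_sub.apply_eq_zero_iff_inner _).mpr hk

end IsKrausRepresentation

theorem subharmonic_iff_kraus_triangular_general
    {H : Type*} [NormedAddCommGroup H] [InnerProductSpace ℂ H]
    [CompleteSpace H]
    (τ : (H →L[ℂ] H) → (H →L[ℂ] H)) (l : ℕ → H →L[ℂ] H)
    (hKraus : ∀ (x : H →L[ℂ] H) (ξ : H),
      HasSum (fun k => star (l k) (x ((l k) ξ))) (τ x ξ))
    (hUnital : ∀ ξ : H, HasSum (fun k => star (l k) ((l k) ξ)) ξ)
    (p : H →L[ℂ] H) (hp_idem : p * p = p) (hp_sa : IsSelfAdjoint p) :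
    (τ p - p).IsPositive ↔ ∀ k : ℕ, (1 - p) * l k * p = 0 := by
  have hτ : IsKrausRepresentation τ l := hKraus
  have hp : IsStarProjection p := ⟨hp_idem, hp_sa⟩
  exact ⟨hτ.one_sub_mul_mul_eq_zero_of_le hUnital hp,
    hτ.le_of_forall_one_sub_mul_mul_eq_zero hUnital hp⟩

theorem subharmonic_iff_kraus_triangular
    {H : Type*} [NormedAddCommGroup H] [InnerProductSpace ℂ H]
    [CompleteSpace H] [TopologicalSpace.SeparableSpace H]
    (τ : (H →L[ℂ] H) → (H →L[ℂ] H)) (l : ℕ → H →L[ℂ] H)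
    (hKraus : ∀ (x : H →L[ℂ] H) (ξ : H),
      HasSum (fun k => star (l k) (x ((l k) ξ))) (τ x ξ))
    (hUnital : ∀ ξ : H, HasSum (fun k => star (l k) ((l k) ξ)) ξ)
    (p : H →L[ℂ] H) (hp_idem : p * p = p) (hp_sa : IsSelfAdjoint p) :
    (τ p - p).IsPositive ↔ ∀ k : ℕ, (1 - p) * l k * p = 0 :=
  subharmonic_iff_kraus_triangular_general τ l hKraus hUnital p hp_idem hp_sa
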